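/- (Monotonicity and limit of the lower bound in Theorem 3.) Fix full-support probability distributions μ ≠ π on 𝒴. For M ≥ 3, define LB(M) as the minimum of 2·B(μ, q) over all probability distributions q on 𝒴 satisfying D(q‖π) ≤ (1/(M−1))·( 2·B(μ,π) + C_π ), with C_π ≜ −log( min_{y∈𝒴} π(y) ). Then the map M ↦ LB(M) is nondecreasing on {3, 4, 5, …}, and lim_{M→∞} LB(M) = 2·B(μ, π). -/

import Mathlib

open Filter Finset Topology

noncomputable section

/-- `p` is a probability distribution on the finite alphabet. -/
def IsProb {𝓨 : Type} [Fintype 𝓨] (p : 𝓨 → ℝ) : Prop :=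
  (∀ y, 0 ≤ p y) ∧ ∑ y, p y = 1

/-- `p` has full support. -/
def FullSupport {𝓨 : Type} (p : 𝓨 → ℝ) : Prop := ∀ y, 0 < p y

/-- Relative entropy `D(q‖p)` (natural log, convention `0·log 0 = 0`,
which holds since `Real.log 0 = 0` in Mathlib). -/
def KL {𝓨 : Type} [Fintype 𝓨] (q p : 𝓨 → ℝ) : ℝ :=
  ∑ y, q y * Real.log (q y / p y)

/-- Bhattacharyya distance `B(p,q) = -log ∑ √(p y) √(q y)`. -/
def Bhat {𝓨 : Type} [Fintype 𝓨] (p q : 𝓨 → ℝ) : ℝ :=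
  - Real.log (∑ y, Real.sqrt (p y) * Real.sqrt (q y))

/-- Feasible values of the lower-bound optimization in Theorem 3:
`2·B(μ,q)` over distributions `q` with
`D(q‖π) ≤ (2B(μ,π) + C_π)/(M-1)`, where `C_π = -log min_y π(y)`. -/
def LBSet {𝓨 : Type} [Fintype 𝓨] (μ π : 𝓨 → ℝ) (M : ℕ) : Set ℝ :=
  {x | ∃ q : 𝓨 → ℝ, IsProb q ∧
    KL q π ≤ (1 / ((M : ℝ) - 1)) * (2 * Bhat μ π + (- Real.log (⨅ y, π y))) ∧
    x = 2 * Bhat μ q}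

/-! For a feasible `q`, Cauchy–Schwarz bounds `|ρ(μ,q) - ρ(μ,π)|`, where `ρ(p,q) = ∑ √p √q` is the
Bhattacharyya coefficient, by the Hellinger distance `(∑ (√q - √π)²)^{1/2} = (2 - 2ρ(q,π))^{1/2}`,
and `2 - 2ρ(q,π) ≤ D(q‖π)` termwise from `log x ≥ 1 - 1/x`. So on the KL ball of radius `r` every
value `2·B(μ,q)` is at least `-2 log (ρ(μ,π) + √r)`, while `q = π` gives `2·B(μ,π)`. The radius
`(2B(μ,π) + C_π)/(M-1)` is nonnegative and decreases to `0`: the feasible sets shrink as `M` grows,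
and the infimum is squeezed to `2·B(μ,π)`. -/

section Distributions

variable {𝓨 : Type} [Fintype 𝓨]

def bhatCoeff (p q : 𝓨 → ℝ) : ℝ := ∑ y, √(p y) * √(q y)

lemma Bhat_eq_neg_log_bhatCoeff (p q : 𝓨 → ℝ) : Bhat p q = -Real.log (bhatCoeff p q) := rfl

lemma IsProb.nonempty {p : 𝓨 → ℝ} (hp : IsProb p) : Nonempty 𝓨 := by
  by_contra h
  rw [not_nonempty_iff] at h
  simpa using hp.2

lemma IsProb.le_one {p : 𝓨 → ℝ} (hp : IsProb p) (y : 𝓨) : p y ≤ 1 :=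
  hp.2 ▸ Finset.single_le_sum (fun z _ => hp.1 z) (Finset.mem_univ y)

lemma IsProb.sum_sqrt_sq {p : 𝓨 → ℝ} (hp : IsProb p) : ∑ y, √(p y) ^ 2 = 1 := by
  simp only [Real.sq_sqrt (hp.1 _), hp.2]

lemma neg_log_iInf_nonneg {p : 𝓨 → ℝ} (hp : IsProb p) : 0 ≤ -Real.log (⨅ y, p y) := by
  have := hp.nonempty
  obtain ⟨y⟩ := hp.nonempty
  refine neg_nonneg.2 (Real.log_nonpos (le_ciInf hp.1) ?_)
  exact (ciInf_le (Set.finite_range p).bddBelow y).trans (hp.le_one y)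

lemma KL_self (p : 𝓨 → ℝ) : KL p p = 0 := by
  simp [KL]

lemma bhatCoeff_nonneg (p q : 𝓨 → ℝ) : 0 ≤ bhatCoeff p q :=
  Finset.sum_nonneg fun _ _ => mul_nonneg (Real.sqrt_nonneg _) (Real.sqrt_nonneg _)

lemma bhatCoeff_le_one {p q : 𝓨 → ℝ} (hp : IsProb p) (hq : IsProb q) : bhatCoeff p q ≤ 1 := by
  have hamgm : ∀ y, √(p y) * √(q y) ≤ (p y + q y) / 2 := fun y => by
    nlinarith [sq_nonneg (√(p y) - √(q y)), Real.sq_sqrt (hp.1 y), Real.sq_sqrt (hq.1 y)]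
  calc bhatCoeff p q ≤ ∑ y, (p y + q y) / 2 := Finset.sum_le_sum fun y _ => hamgm y
    _ = 1 := by rw [← Finset.sum_div, Finset.sum_add_distrib, hp.2, hq.2]; norm_num

lemma bhatCoeff_pos {p q : 𝓨 → ℝ} (hp : FullSupport p) (hq : IsProb q) : 0 < bhatCoeff p q := by
  obtain ⟨y, hy⟩ : ∃ y, 0 < q y := by
    by_contra! h
    have : ∑ y, q y = 0 := Finset.sum_eq_zero fun y _ => le_antisymm (h y) (hq.1 y)
    simp [hq.2] at this
  exact Finset.sum_pos' (fun _ _ => mul_nonneg (Real.sqrt_nonneg _) (Real.sqrt_nonneg _))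
    ⟨y, Finset.mem_univ y, mul_pos (Real.sqrt_pos.2 (hp y)) (Real.sqrt_pos.2 hy)⟩

lemma Bhat_nonneg {p q : 𝓨 → ℝ} (hp : IsProb p) (hq : IsProb q) : 0 ≤ Bhat p q :=
  neg_nonneg.2 (Real.log_nonpos (bhatCoeff_nonneg p q) (bhatCoeff_le_one hp hq))

-- `log x ≥ 1 - 1/x` applied at `x = √(a/b)`
lemma two_mul_sub_sqrt_mul_sqrt_le_mul_log {a b : ℝ} (ha : 0 ≤ a) (hb : 0 < b) :
    2 * (a - √a * √b) ≤ a * Real.log (a / b) := by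
  rcases ha.eq_or_lt with rfl | ha
  · simp
  have hsa := Real.sqrt_pos.2 ha
  have hsb := Real.sqrt_pos.2 hb
  have hlog : Real.log (a / b) = 2 * Real.log (√a / √b) := by
    rw [← Real.sqrt_div' _ hb.le, Real.log_sqrt (div_pos ha hb).le]; ring
  have hlog_ge := Real.one_sub_inv_le_log_of_pos (div_pos hsa hsb)
  rw [inv_div] at hlog_ge
  calc 2 * (a - √a * √b) = 2 * a * (1 - √b / √a) := by
        field_simp; linear_combination -√b * Real.mul_self_sqrt ha.le
    _ ≤ 2 * a * Real.log (√a / √b) := by gcongr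
    _ = a * Real.log (a / b) := by rw [hlog]; ring

lemma two_mul_one_sub_bhatCoeff_le_KL {q p : 𝓨 → ℝ} (hq : IsProb q) (hp : FullSupport p) :
    2 * (1 - bhatCoeff q p) ≤ KL q p := by
  calc 2 * (1 - bhatCoeff q p) = ∑ y, 2 * (q y - √(q y) * √(p y)) := by
        rw [← Finset.mul_sum, Finset.sum_sub_distrib, hq.2, bhatCoeff]
    _ ≤ KL q p := Finset.sum_le_sum fun y _ =>
        two_mul_sub_sqrt_mul_sqrt_le_mul_log (hq.1 y) (hp y)

lemma sum_sq_sqrt_sub_sqrt {q p : 𝓨 → ℝ} (hq : IsProb q) (hp : IsProb p) :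
    ∑ y, (√(q y) - √(p y)) ^ 2 = 2 * (1 - bhatCoeff q p) := by
  simp only [sub_sq, Finset.sum_add_distrib, Finset.sum_sub_distrib, hq.sum_sqrt_sq,
    hp.sum_sqrt_sq, mul_assoc, ← Finset.mul_sum, bhatCoeff]
  ring

lemma sq_bhatCoeff_sub_bhatCoeff_le {μ q π : 𝓨 → ℝ} (hμ : IsProb μ) (hq : IsProb q)
    (hπ : IsProb π) : (bhatCoeff μ q - bhatCoeff μ π) ^ 2 ≤ 2 * (1 - bhatCoeff q π) := by
  have hcs := Finset.sum_mul_sq_le_sq_mul_sq Finset.univ (fun y => √(μ y))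
    (fun y => √(q y) - √(π y))
  simpa only [hμ.sum_sqrt_sq, sum_sq_sqrt_sub_sqrt hq hπ, one_mul, mul_sub,
    Finset.sum_sub_distrib, bhatCoeff] using hcs

lemma sq_bhatCoeff_sub_bhatCoeff_le_KL {μ q π : 𝓨 → ℝ} (hμ : IsProb μ) (hq : IsProb q)
    (hπ : IsProb π) (hπf : FullSupport π) :
    (bhatCoeff μ q - bhatCoeff μ π) ^ 2 ≤ KL q π :=
  (sq_bhatCoeff_sub_bhatCoeff_le hμ hq hπ).trans (two_mul_one_sub_bhatCoeff_le_KL hq hπf)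

end Distributions

section KLBall

variable {𝓨 : Type} [Fintype 𝓨] {μ π : 𝓨 → ℝ}

def bhatValuesKLBall (μ π : 𝓨 → ℝ) (r : ℝ) : Set ℝ :=
  {x | ∃ q : 𝓨 → ℝ, IsProb q ∧ KL q π ≤ r ∧ x = 2 * Bhat μ q}

lemma LBSet_eq_bhatValuesKLBall (M : ℕ) : LBSet μ π M =
    bhatValuesKLBall μ π (1 / ((M : ℝ) - 1) * (2 * Bhat μ π + -Real.log (⨅ y, π y))) := rfl

lemma bhatValuesKLBall_mono {r r' : ℝ} (h : r ≤ r') :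
    bhatValuesKLBall μ π r ⊆ bhatValuesKLBall μ π r' := by
  rintro x ⟨q, hq, hKL, rfl⟩
  exact ⟨q, hq, hKL.trans h, rfl⟩

lemma two_mul_Bhat_mem_bhatValuesKLBall (hπ : IsProb π) {r : ℝ} (hr : 0 ≤ r) :
    2 * Bhat μ π ∈ bhatValuesKLBall μ π r :=
  ⟨π, hπ, (KL_self π).trans_le hr, rfl⟩

lemma bhatValuesKLBall_bddBelow (hμ : IsProb μ) (r : ℝ) : BddBelow (bhatValuesKLBall μ π r) := by
  refine ⟨0, ?_⟩
  rintro x ⟨q, hq, -, rfl⟩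
  exact mul_nonneg zero_le_two (Bhat_nonneg hμ hq)

lemma neg_two_mul_log_le_of_mem_bhatValuesKLBall (hμ : IsProb μ) (hπ : IsProb π)
    (hμf : FullSupport μ) (hπf : FullSupport π) {r x : ℝ} (hx : x ∈ bhatValuesKLBall μ π r) :
    -2 * Real.log (bhatCoeff μ π + √r) ≤ x := by
  obtain ⟨q, hq, hKL, rfl⟩ := hx
  have hdiff : bhatCoeff μ q - bhatCoeff μ π ≤ √r := (le_abs_self _).trans
    (Real.abs_le_sqrt ((sq_bhatCoeff_sub_bhatCoeff_le_KL hμ hq hπ hπf).trans hKL))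
  have := Real.log_le_log (bhatCoeff_pos hμf hq)
    (show bhatCoeff μ q ≤ bhatCoeff μ π + √r by linarith)
  rw [Bhat_eq_neg_log_bhatCoeff]
  linarith

lemma tendsto_sInf_bhatValuesKLBall (hμ : IsProb μ) (hπ : IsProb π) (hμf : FullSupport μ)
    (hπf : FullSupport π) :
    Tendsto (fun r => sInf (bhatValuesKLBall μ π r)) (𝓝[≥] 0) (𝓝 (2 * Bhat μ π)) := by
  have hρ := bhatCoeff_pos hμf hπ
  have hlower : Tendsto (fun r => -2 * Real.log (bhatCoeff μ π + √r)) (𝓝[≥] 0)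
      (𝓝 (2 * Bhat μ π)) := by
    have hcont : ContinuousAt (fun r => -2 * Real.log (bhatCoeff μ π + √r)) 0 :=
      ((Real.continuous_sqrt.continuousAt.const_add _).log (by simpa using hρ.ne')).const_mul _
    simpa [Bhat_eq_neg_log_bhatCoeff] using hcont.tendsto.mono_left nhdsWithin_le_nhds
  have hr : ∀ᶠ r in 𝓝[≥] (0 : ℝ), 0 ≤ r := self_mem_nhdsWithin
  refine tendsto_of_tendsto_of_tendsto_of_le_of_le' hlower tendsto_const_nhds
    (hr.mono fun r hr => ?_) (hr.mono fun r hr => ?_)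
  · exact le_csInf ⟨_, two_mul_Bhat_mem_bhatValuesKLBall hπ hr⟩ fun x hx =>
      neg_two_mul_log_le_of_mem_bhatValuesKLBall hμ hπ hμf hπf hx
  · exact csInf_le (bhatValuesKLBall_bddBelow hμ r) (two_mul_Bhat_mem_bhatValuesKLBall hπ hr)

end KLBall

section Radius

variable {c : ℝ}

lemma one_div_natCast_sub_one_mul_nonneg (hc : 0 ≤ c) {M : ℕ} (hM : 2 ≤ M) :
    0 ≤ 1 / ((M : ℝ) - 1) * c := by
  have : (2 : ℝ) ≤ M := by exact_mod_cast hM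
  exact mul_nonneg (one_div_nonneg.2 (by linarith)) hc

lemma one_div_natCast_sub_one_mul_le_of_le (hc : 0 ≤ c) {M M' : ℕ} (hM : 2 ≤ M) (h : M ≤ M') :
    1 / ((M' : ℝ) - 1) * c ≤ 1 / ((M : ℝ) - 1) * c := by
  have : (2 : ℝ) ≤ M := by exact_mod_cast hM
  have : (M : ℝ) ≤ M' := by exact_mod_cast h
  gcongr; linarith

lemma tendsto_one_div_natCast_sub_one_mul (hc : 0 ≤ c) :
    Tendsto (fun M : ℕ => 1 / ((M : ℝ) - 1) * c) atTop (𝓝[≥] 0) := by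
  refine tendsto_nhdsWithin_iff.2 ⟨?_, ?_⟩
  · simpa [sub_eq_add_neg] using ((tendsto_atTop_add_const_right _ (-1 : ℝ)
      tendsto_natCast_atTop_atTop).inv_tendsto_atTop).mul_const c
  · filter_upwards [eventually_ge_atTop 2] with M hM
    exact one_div_natCast_sub_one_mul_nonneg hc hM

end Radius

theorem statement11_general (𝓨 : Type) [Fintype 𝓨]
    (μ π : 𝓨 → ℝ) (hμ : IsProb μ) (hπ : IsProb π)
    (hμf : FullSupport μ) (hπf : FullSupport π) :
    (∀ M M' : ℕ, 3 ≤ M → M ≤ M' → sInf (LBSet μ π M) ≤ sInf (LBSet μ π M')) ∧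
    Tendsto (fun M : ℕ => sInf (LBSet μ π M)) atTop (𝓝 (2 * Bhat μ π)) := by
  have hC : 0 ≤ 2 * Bhat μ π + -Real.log (⨅ y, π y) :=
    add_nonneg (mul_nonneg zero_le_two (Bhat_nonneg hμ hπ)) (neg_log_iInf_nonneg hπ)
  simp only [LBSet_eq_bhatValuesKLBall]
  refine ⟨fun M M' hM hMM' => ?_, ?_⟩
  · exact csInf_le_csInf (bhatValuesKLBall_bddBelow hμ _)
      ⟨_, two_mul_Bhat_mem_bhatValuesKLBall hπ
        (one_div_natCast_sub_one_mul_nonneg hC (by omega : 2 ≤ M'))⟩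
      (bhatValuesKLBall_mono (one_div_natCast_sub_one_mul_le_of_le hC (by omega) hMM'))
  · exact (tendsto_sInf_bhatValuesKLBall hμ hπ hμf hπf).comp
      (tendsto_one_div_natCast_sub_one_mul hC)

/-- monotonicity and limit of the lower bound in Theorem 3.
The lower bound `LB(M)` is nondecreasing in `M ≥ 3` and converges to
`2·B(μ,π)` as `M → ∞`. -/
theorem statement11 (𝓨 : Type) [Fintype 𝓨] [Nonempty 𝓨]
    (μ π : 𝓨 → ℝ) (hμ : IsProb μ) (hπ : IsProb π)
    (hμf : FullSupport μ) (hπf : FullSupport π) (hne : μ ≠ π) :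
    (∀ M M' : ℕ, 3 ≤ M → M ≤ M' → sInf (LBSet μ π M) ≤ sInf (LBSet μ π M')) ∧
    Tendsto (fun M : ℕ => sInf (LBSet μ π M)) atTop (𝓝 (2 * Bhat μ π)) :=
  statement11_general 𝓨 μ π hμ hπ hμf hπf
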